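/- arXiv:2103.11960 — 7 statements merged into one kernel-verified Lean document; each statement's English description precedes it below -/
import Mathlib

section
/- The sum over n from 1 to infinity of (1/(n·4^n))·C(2n,n) equals ln 4. -/
open Finset Real

noncomputable def H (n : ℕ) : ℝ := ∑ i ∈ Finset.range n, 1/((i:ℝ)+1)

noncomputable def H2 (n : ℕ) : ℝ := ∑ i ∈ Finset.range n, 1/((i:ℝ)+1)^2

noncomputable def H3 (n : ℕ) : ℝ := ∑ i ∈ Finset.range n, 1/((i:ℝ)+1)^3

noncomputable def hh (r n : ℕ) : ℝ := (Nat.choose (n+r-1) (r-1)) * (H (n+r-1) - H (r-1))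

noncomputable def zeta3 : ℝ := ∑' n : ℕ, 1/((n:ℝ)+1)^3

/-!
Write `c n = C(2n,n) / 4^n`. The binomial series gives `∑ c n xⁿ = (1 - x)^(-1/2)` for `|x| < 1`,
so `F x = ∑_{n ≥ 1} c n xⁿ / n` has derivative `((1 - x)^(-1/2) - 1) / x = 1 / (s (1 + s))` with
`s = √(1 - x)`. This is also the derivative of `2 log 2 - 2 log (1 + s)`, and both functions vanish
at `0`, so they agree on `(-1, 1)`. Since `c n / (n + 1) = 2 (c n - c (n + 1))` telescopes, the
series `∑ c n / n` converges, and Abel's theorem lets `x → 1⁻`, giving `2 log 2 = log 4`.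
-/

open Filter Topology

noncomputable def centralBinomRatio (n : ℕ) : ℝ := n.centralBinom / 4 ^ n

@[simp]
lemma centralBinomRatio_zero : centralBinomRatio 0 = 1 := by simp [centralBinomRatio]

lemma centralBinomRatio_pos (n : ℕ) : 0 < centralBinomRatio n := by
  have := n.centralBinom_pos
  unfold centralBinomRatio
  positivity

lemma centralBinomRatio_succ (n : ℕ) :
    centralBinomRatio (n + 1) = centralBinomRatio n * (n + 1 / 2) / (n + 1) := by
  have h : ((n : ℝ) + 1) * (n + 1).centralBinom = 2 * (2 * n + 1) * n.centralBinom := by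
    exact_mod_cast Nat.succ_mul_centralBinom_succ n
  unfold centralBinomRatio
  rw [pow_succ]
  field_simp
  linear_combination 2 * h

lemma centralBinomRatio_div_succ (n : ℕ) :
    centralBinomRatio n / (n + 1) = 2 * (centralBinomRatio n - centralBinomRatio (n + 1)) := by
  rw [centralBinomRatio_succ]
  field_simp
  ring

lemma centralBinomRatio_succ_le (n : ℕ) : centralBinomRatio (n + 1) ≤ centralBinomRatio n := by
  have := centralBinomRatio_pos n
  have : 0 ≤ centralBinomRatio n / (n + 1) := by positivity
  linarith [centralBinomRatio_div_succ n]

lemma Ring.multichoose_one_half (n : ℕ) :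
    Ring.multichoose (1 / 2 : ℝ) n = centralBinomRatio n := by
  have key (n : ℕ) : (n.factorial : ℝ) * Ring.multichoose (1 / 2 : ℝ) n
      = (ascPochhammer ℝ n).eval (1 / 2 : ℝ) := by
    rw [← nsmul_eq_mul, Ring.factorial_nsmul_multichoose_eq_ascPochhammer,
      Polynomial.ascPochhammer_smeval_eq_eval]
  induction n with
  | zero => simp
  | succ n ih =>
    have h := key (n + 1)
    rw [ascPochhammer_succ_right, Polynomial.eval_mul, ← key n, Nat.factorial_succ] at h
    simp only [Nat.cast_mul, Nat.cast_succ, Polynomial.eval_add, Polynomial.eval_X,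
      Polynomial.eval_natCast] at h
    rw [centralBinomRatio_succ, ← ih, eq_div_iff (by positivity)]
    apply mul_left_cancel₀ (by positivity : (n.factorial : ℝ) ≠ 0)
    linear_combination h

lemma hasSum_centralBinomRatio_mul_pow {x : ℝ} (hx : |x| < 1) :
    HasSum (fun n => centralBinomRatio n * x ^ n) (√(1 - x))⁻¹ := by
  have hx' : x ∈ Metric.eball (0 : ℝ) 1 := by
    rw [← ENNReal.ofReal_one, Metric.eball_ofReal]
    simpa using hx
  have h := (one_div_one_sub_rpow_hasFPowerSeriesOnBall_zero (1 / 2)).hasSum hx'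
  simp only [FormalMultilinearSeries.ofScalars_apply_eq, zero_add, ← Ring.multichoose_eq,
    Ring.multichoose_one_half, smul_eq_mul] at h
  rwa [sqrt_eq_rpow, inv_eq_one_div]

lemma hasSum_centralBinomRatio_succ_mul_pow {x : ℝ} (hx : |x| < 1) :
    HasSum (fun n => centralBinomRatio (n + 1) * x ^ n) (√(1 - x) * (1 + √(1 - x)))⁻¹ := by
  rcases eq_or_ne x 0 with rfl | hx0
  · convert hasSum_single (f := fun n => centralBinomRatio (n + 1) * (0 : ℝ) ^ n) 0
      (fun n hn => by simp [hn]) using 1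
    norm_num [centralBinomRatio_succ 0]
  · have hs : 0 < √(1 - x) := sqrt_pos.mpr (by linarith [le_abs_self x])
    have hsq : √(1 - x) ^ 2 = 1 - x := sq_sqrt (by linarith [le_abs_self x])
    have h := (hasSum_nat_add_iff' 1).mpr (hasSum_centralBinomRatio_mul_pow hx)
    simp only [sum_range_one, centralBinomRatio_zero, pow_zero, mul_one] at h
    have hterm : (fun n => centralBinomRatio (n + 1) * x ^ n)
        = fun n => centralBinomRatio (n + 1) * x ^ (n + 1) / x := by
      funext n
      field_simp
      ring
    have hsum : (√(1 - x) * (1 + √(1 - x)))⁻¹ = ((√(1 - x))⁻¹ - 1) / x := by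
      field_simp
      linear_combination hsq
    rw [hterm, hsum]
    exact h.div_const x

noncomputable def centralBinomLogSeries (x : ℝ) : ℝ :=
  ∑' n : ℕ, centralBinomRatio (n + 1) / (n + 1) * x ^ (n + 1)

lemma hasDerivAt_centralBinomLogSeries {x : ℝ} (hx : |x| < 1) :
    HasDerivAt centralBinomLogSeries (√(1 - x) * (1 + √(1 - x)))⁻¹ x := by
  set ρ := (|x| + 1) / 2 with hρ_def
  have hρ : |ρ| < 1 := by rw [abs_of_nonneg (by positivity)]; linarith
  have hxρ : x ∈ Set.Ioo (-ρ) ρ := abs_lt.mp (by linarith)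
  rw [← (hasSum_centralBinomRatio_succ_mul_pow hx).tsum_eq]
  refine hasDerivAt_tsum_of_isPreconnected (hasSum_centralBinomRatio_succ_mul_pow hρ).summable
    isOpen_Ioo isPreconnected_Ioo
    (g := fun n y => centralBinomRatio (n + 1) / (n + 1) * y ^ (n + 1))
    (g' := fun n y => centralBinomRatio (n + 1) * y ^ n)
    (fun n y _ => ?_) (fun n y hy => ?_) (y₀ := 0)
    (by constructor <;> linarith [abs_nonneg x]) (by simp) hxρ
  · refine ((hasDerivAt_pow (n + 1) y).const_mul _).congr_deriv ?_
    push_cast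
    field_simp
  · rw [norm_mul, norm_pow, norm_of_nonneg (centralBinomRatio_pos _).le, norm_eq_abs]
    exact mul_le_mul_of_nonneg_left (pow_le_pow_left₀ (abs_nonneg y)
      (abs_le.mpr ⟨hy.1.le, hy.2.le⟩) n) (centralBinomRatio_pos _).le

lemma hasDerivAt_log_one_add_sqrt_one_sub {x : ℝ} (hx : x < 1) :
    HasDerivAt (fun y => log (1 + √(1 - y))) (-(√(1 - x) * (1 + √(1 - x)))⁻¹ / 2) x := by
  have hs : 0 < √(1 - x) := sqrt_pos.mpr (by linarith)
  refine ((((hasDerivAt_id' x).const_sub 1).sqrt (by linarith)).const_add 1 |>.log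
    (by positivity)).congr_deriv ?_
  field_simp

lemma centralBinomLogSeries_eq {x : ℝ} (hx : x ∈ Set.Ioo (-1) 1) :
    centralBinomLogSeries x = 2 * log 2 - 2 * log (1 + √(1 - x)) := by
  have hF (y : ℝ) (hy : y ∈ Set.Ioo (-1 : ℝ) 1) :=
    hasDerivAt_centralBinomLogSeries (abs_lt.mpr hy)
  have hG (y : ℝ) (hy : y ∈ Set.Ioo (-1 : ℝ) 1) :
      HasDerivAt (fun y => 2 * log 2 - 2 * log (1 + √(1 - y)))
        (√(1 - y) * (1 + √(1 - y)))⁻¹ y := by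
    refine (((hasDerivAt_log_one_add_sqrt_one_sub hy.2).const_mul 2).const_sub _).congr_deriv ?_
    ring
  refine isOpen_Ioo.eqOn_of_deriv_eq isPreconnected_Ioo
    (fun y hy => (hF y hy).differentiableAt.differentiableWithinAt)
    (fun y hy => (hG y hy).differentiableAt.differentiableWithinAt)
    (fun y hy => (hF y hy).deriv.trans (hG y hy).deriv.symm)
    (by norm_num : (0 : ℝ) ∈ Set.Ioo (-1) 1) ?_ hx
  norm_num [centralBinomLogSeries]

lemma summable_centralBinomRatio_succ_div :
    Summable fun n : ℕ => centralBinomRatio (n + 1) / (n + 1) := by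
  refine summable_of_sum_range_le (c := 2)
    (fun n => by have := centralBinomRatio_pos (n + 1); positivity) fun N => ?_
  calc ∑ n ∈ range N, centralBinomRatio (n + 1) / (n + 1)
      ≤ ∑ n ∈ range N, 2 * (centralBinomRatio n - centralBinomRatio (n + 1)) := by
        gcongr with n
        rw [← centralBinomRatio_div_succ]
        gcongr
        exact centralBinomRatio_succ_le n
    _ = 2 * (1 - centralBinomRatio N) := by
        rw [← mul_sum, sum_range_sub', centralBinomRatio_zero]
    _ ≤ 2 := by linarith [centralBinomRatio_pos N]

lemma tsum_centralBinomRatio_succ_div :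
    ∑' n : ℕ, centralBinomRatio (n + 1) / (n + 1) = 2 * log 2 := by
  have habel := tendsto_tsum_powerSeries_nhdsWithin_lt
    summable_centralBinomRatio_succ_div.hasSum.tendsto_sum_nat
  have hseries : Tendsto centralBinomLogSeries (𝓝[<] 1)
      (𝓝 (∑' n : ℕ, centralBinomRatio (n + 1) / (n + 1))) := by
    have h := (tendsto_id.mono_left nhdsWithin_le_nhds).mul habel
    simp only [id, one_mul] at h
    refine h.congr fun x => ?_
    rw [centralBinomLogSeries, ← tsum_mul_left]
    exact tsum_congr fun n => by ring
  have hclosed : Tendsto centralBinomLogSeries (𝓝[<] 1) (𝓝 (2 * log 2)) := by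
    have hcont : ContinuousAt (fun x => 2 * log 2 - 2 * log (1 + √(1 - x))) 1 := by
      fun_prop (disch := norm_num)
    have h := hcont.tendsto.mono_left (nhdsWithin_le_nhds (s := Set.Iio 1))
    norm_num at h
    refine h.congr' ?_
    filter_upwards [Ioo_mem_nhdsLT (show (-1 : ℝ) < 1 by norm_num)] with x hx
    exact (centralBinomLogSeries_eq hx).symm
  exact tendsto_nhds_unique hseries hclosed

theorem stmt0 :
    ∑' n : ℕ, (1 / (((n:ℝ)+1) * 4^(n+1))) * (Nat.choose (2*(n+1)) (n+1) : ℝ) = Real.log 4 := by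
  have hterm (n : ℕ) : 1 / (((n : ℝ) + 1) * 4 ^ (n + 1)) * (Nat.choose (2 * (n + 1)) (n + 1) : ℝ)
      = centralBinomRatio (n + 1) / (n + 1) := by
    rw [centralBinomRatio, Nat.centralBinom_eq_two_mul_choose]
    field_simp
  rw [tsum_congr hterm, tsum_centralBinomRatio_succ_div, show (4 : ℝ) = 2 ^ 2 by norm_num,
    log_pow]
  push_cast
  ring
end

section
/- For every positive integer p, the sum over n from 1 to p of (−1)^{n+1}·C(p+1, n+1)·H_n/(n+1) equals (H_{p+1}² − H_{p+1}^{(2)})/2. -/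
open Finset Real

/-!
For the binomial transform `T f n = ∑_{k ≤ n} (-1)^k C(n,k) f k` one has `T f (n+1) = -T (Δf) n`;
Pascal's rule gives `∑_{k < n} (-1)^k C(n,k+1) f k = ∑_{j < n} T f j`, and absorption
`C(n,k)/(k+1) = C(n+1,k+1)/(n+1)` turns `T (f k/(k+1)) n` into `(∑_{j ≤ n} T f j)/(n+1)`.
As `Δ H_k = 1/(k+1)`, this yields `T H (n+1) = -1/(n+1)` and then `T (H_k/(k+1)) n = -H_n/(n+1)`.
Hence the sum equals `∑_{m ≤ p} H_m/(m+1)`, the second elementary symmetric function of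
`1, 1/2, …, 1/(p+1)`, which is `(H_{p+1}² - H_{p+1}^{(2)})/2`.
-/

open scoped fwdDiff

section BinomialTransform

variable {R : Type*} [CommRing R]

def binomTransform (f : ℕ → R) (n : ℕ) : R :=
  ∑ k ∈ range (n + 1), (-1) ^ k * n.choose k * f k

@[simp] lemma binomTransform_zero (f : ℕ → R) : binomTransform f 0 = f 0 := by
  simp [binomTransform]

lemma binomTransform_succ (f : ℕ → R) (n : ℕ) :
    binomTransform f (n + 1) = -binomTransform (Δ_[1] f) n := by
  calc binomTransform f (n + 1)
      = ∑ k ∈ range (n + 2), ((n + 1).choose k : R) * ((-1) ^ k * f k) :=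
        sum_congr rfl fun k _ => by ring
    _ = ∑ k ∈ range (n + 1), (n.choose k : R) * ((-1) ^ k * f k)
          + ∑ k ∈ range (n + 1), (n.choose k : R) * ((-1) ^ (k + 1) * f (k + 1)) :=
        sum_choose_succ_mul (fun k _ => (-1) ^ k * f k) n
    _ = -binomTransform (Δ_[1] f) n := by
        rw [binomTransform, ← sum_add_distrib, ← sum_neg_distrib]
        exact sum_congr rfl fun k _ => by simp only [fwdDiff]; ring

lemma sum_range_neg_one_pow_mul_choose_succ (f : ℕ → R) (n : ℕ) :
    ∑ k ∈ range n, (-1) ^ k * n.choose (k + 1) * f k = ∑ j ∈ range n, binomTransform f j := by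
  induction n with
  | zero => simp
  | succ n ih =>
    have top_vanishes : ∑ k ∈ range (n + 1), (-1) ^ k * (n.choose (k + 1) : R) * f k
        = ∑ k ∈ range n, (-1) ^ k * n.choose (k + 1) * f k := by
      simp [sum_range_succ]
    simp only [Nat.choose_succ_succ', Nat.cast_add, mul_add, add_mul, sum_add_distrib]
    rw [top_vanishes, ih, sum_range_succ (binomTransform f), add_comm]
    rfl

end BinomialTransform

section Field

variable {K : Type*} [Field K] [CharZero K]

lemma binomTransform_div_succ (f : ℕ → K) (n : ℕ) :
    binomTransform (fun k => f k / (k + 1)) n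
      = (∑ j ∈ range (n + 1), binomTransform f j) / (n + 1) := by
  rw [← sum_range_neg_one_pow_mul_choose_succ, sum_div, binomTransform]
  refine sum_congr rfl fun k _ => ?_
  have absorption : (n.choose k : K) / (k + 1) = (n + 1).choose (k + 1) / (n + 1) := by
    rw [div_eq_div_iff (Nat.cast_add_one_ne_zero k) (Nat.cast_add_one_ne_zero n)]
    exact_mod_cast (mul_comm _ _).trans (Nat.add_one_mul_choose_eq n k)
  calc (-1) ^ k * (n.choose k : K) * (f k / (k + 1))
      = (-1) ^ k * ((n.choose k : K) / (k + 1)) * f k := by ring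
    _ = _ := by rw [absorption]; ring

lemma binomTransform_one_div_succ (n : ℕ) :
    binomTransform (fun k : ℕ => 1 / ((k : K) + 1)) n = 1 / (n + 1) := by
  have const_succ (j : ℕ) : binomTransform (fun _ => (1 : K)) (j + 1) = 0 := by
    rw [binomTransform_succ, fwdDiff_const]
    simp [binomTransform]
  rw [binomTransform_div_succ (fun _ => 1), sum_range_succ', sum_eq_zero fun j _ => const_succ j]
  simp

end Field

lemma fwdDiff_H : Δ_[1] H = fun k : ℕ => 1 / ((k : ℝ) + 1) := by
  ext k
  simp [fwdDiff, H, sum_range_succ]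

lemma binomTransform_H_succ (n : ℕ) : binomTransform H (n + 1) = -(1 / ((n : ℝ) + 1)) := by
  rw [binomTransform_succ, fwdDiff_H, binomTransform_one_div_succ]

lemma binomTransform_H_div_succ (n : ℕ) :
    binomTransform (fun k => H k / ((k : ℝ) + 1)) n = -H n / ((n : ℝ) + 1) := by
  rw [binomTransform_div_succ, sum_range_succ']
  simp [binomTransform_H_succ, H]

lemma sum_range_H_div_succ (N : ℕ) :
    ∑ m ∈ range N, H m / ((m : ℝ) + 1) = ((H N) ^ 2 - H2 N) / 2 := by
  induction N with
  | zero => simp [H, H2]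
  | succ N ih =>
    have H_succ : H (N + 1) = H N + 1 / ((N : ℝ) + 1) := sum_range_succ _ N
    have H2_succ : H2 (N + 1) = H2 N + 1 / ((N : ℝ) + 1) ^ 2 := sum_range_succ _ N
    rw [sum_range_succ, ih, H_succ, H2_succ]
    field_simp
    ring

theorem stmt3_general (p : ℕ) :
    ∑ n ∈ Finset.Icc 1 p, (-1:ℝ)^(n+1) * (Nat.choose (p+1) (n+1) : ℝ) * H n / ((n:ℝ)+1)
      = ((H (p+1))^2 - H2 (p+1)) / 2 := by
  have H_zero : H 0 = 0 := by simp [H]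
  have icc_to_range : ∑ n ∈ Icc 1 p, (-1:ℝ)^(n+1) * (Nat.choose (p+1) (n+1) : ℝ) * H n / ((n:ℝ)+1)
      = -∑ n ∈ range (p + 1), (-1) ^ n * ((p + 1).choose (n + 1) : ℝ) * (H n / ((n : ℝ) + 1)) := by
    rw [range_eq_Ico, sum_eq_sum_Ico_succ_bot (by omega), H_zero, zero_div, mul_zero, zero_add,
      zero_add, Ico_add_one_right_eq_Icc, ← sum_neg_distrib]
    exact sum_congr rfl fun n _ => by ring
  rw [icc_to_range, sum_range_neg_one_pow_mul_choose_succ (fun k => H k / ((k : ℝ) + 1)),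
    ← sum_range_H_div_succ]
  simp [binomTransform_H_div_succ, neg_div]

theorem stmt3 (p : ℕ) (hp : 1 ≤ p) :
    ∑ n ∈ Finset.Icc 1 p, (-1:ℝ)^(n+1) * (Nat.choose (p+1) (n+1) : ℝ) * H n / ((n:ℝ)+1)
      = ((H (p+1))^2 - H2 (p+1)) / 2 :=
  stmt3_general p
end

section
/- For every nonnegative integer n, the sum over k from 0 to n of C(n,k)·(−1)^k·C(2k,k)/4^k equals C(2n,n)/4^n. -/
open Finset Real

/-! By Wallis, `∫₀^π cos²ᵏ = ∫₀^π sin²ᵏ = π C(2k,k)/4ᵏ`. Integrating the binomial expansion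
`sin²ⁿ x = (1 - cos² x)ⁿ` over `[0, π]` therefore gives the identity, multiplied by `π`. -/

lemma centralBinom_div_four_pow_eq_prod (n : ℕ) :
    (n.centralBinom : ℝ) / 4 ^ n = ∏ i ∈ range n, (2 * (i : ℝ) + 1) / (2 * i + 2) := by
  induction n with
  | zero => simp
  | succ k ih =>
    have h : ((k + 1 : ℕ) : ℝ) * (k + 1).centralBinom = 2 * (2 * k + 1) * k.centralBinom := by
      exact_mod_cast k.succ_mul_centralBinom_succ
    rw [prod_range_succ, ← ih]
    push_cast at h
    field_simp
    linear_combination 2 * 4 ^ k * h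

lemma integral_sin_pow_even_eq_centralBinom (n : ℕ) :
    ∫ x in 0..π, sin x ^ (2 * n) = π * n.centralBinom / 4 ^ n := by
  rw [integral_sin_pow_even, mul_div_assoc, centralBinom_div_four_pow_eq_prod]

lemma integral_cos_pow_even_eq_centralBinom (n : ℕ) :
    ∫ x in 0..π, cos x ^ (2 * n) = π * n.centralBinom / 4 ^ n := by
  rw [mul_div_assoc, centralBinom_div_four_pow_eq_prod]
  induction n with
  | zero => simp
  | succ k ih =>
    rw [prod_range_succ_comm, mul_left_comm, ← ih, Nat.mul_succ, integral_cos_pow]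
    norm_cast
    field_simp
    simp

lemma sin_pow_even_eq_sum (x : ℝ) (n : ℕ) :
    sin x ^ (2 * n) = ∑ k ∈ range (n + 1), (n.choose k : ℝ) * (-1) ^ k * cos x ^ (2 * k) := by
  rw [pow_mul, sin_sq, sub_eq_neg_add, add_pow]
  refine sum_congr rfl fun k _ => ?_
  rw [neg_pow, pow_mul]
  ring

theorem stmt6 (n : ℕ) :
    ∑ k ∈ Finset.range (n+1), (Nat.choose n k : ℝ) * (-1)^k * (Nat.choose (2*k) k : ℝ) / 4^k
      = (Nat.choose (2*n) n : ℝ) / 4^n := by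
  simp_rw [← Nat.centralBinom_eq_two_mul_choose]
  refine mul_left_cancel₀ pi_ne_zero ?_
  calc π * ∑ k ∈ range (n + 1), (n.choose k : ℝ) * (-1) ^ k * k.centralBinom / 4 ^ k
      = ∑ k ∈ range (n + 1), (n.choose k : ℝ) * (-1) ^ k * ∫ x in 0..π, cos x ^ (2 * k) := by
        rw [mul_sum]
        refine sum_congr rfl fun k _ => ?_
        rw [integral_cos_pow_even_eq_centralBinom]
        ring
    _ = ∫ x in 0..π, sin x ^ (2 * n) := by
        simp_rw [sin_pow_even_eq_sum]
        rw [intervalIntegral.integral_finsetSum fun k _ => by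
          apply Continuous.intervalIntegrable; fun_prop]
        simp_rw [intervalIntegral.integral_const_mul]
    _ = π * (n.centralBinom / 4 ^ n) := by
        rw [integral_sin_pow_even_eq_centralBinom, mul_div_assoc]
end

section
/- For every positive integer n, the sum over k from 1 to n of C(n,k)·(−1)^k·(1 − 2^k)/k equals the n-th skew-harmonic number H_n^− = 1 − 1/2 + 1/3 − ... + (−1)^{n−1}/n. -/
open Finset Real

/-!
Since `(-1)^k (1 - 2^k) = (-1)^k - (-2)^k`, the left side is `S_n(-1) - S_n(-2)` for
`S_n(x) = ∑_{k=1}^n C(n,k) x^k / k`, and `S_n(x) = ∑_{j=1}^n ((1+x)^j - 1) / j`: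
by Pascal's rule and `C(n,k) / (k+1) = C(n+1,k+1) / (n+1)`, the increment `S_{n+1}(x) - S_n(x)` is
`((1+x)^{n+1} - 1) / (n+1)`. Hence `S_n(-1) - S_n(-2) = ∑_{j=1}^n (0^j - (-1)^j) / j = H_n^-`.
-/

theorem sum_Icc_one_eq_sum_range {M : Type*} [AddCommMonoid M] (f : ℕ → M) (n : ℕ) :
    ∑ k ∈ Icc 1 n, f k = ∑ k ∈ range n, f (k + 1) := by
  rw [← Ico_add_one_right_eq_Icc, sum_Ico_eq_sum_range]
  simp only [Nat.add_sub_cancel, add_comm 1]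

theorem sum_range_choose_succ_mul_pow_succ {R : Type*} [CommRing R] (n : ℕ) (x : R) :
    ∑ k ∈ range n, (n.choose (k + 1) : R) * x ^ (k + 1) = (1 + x) ^ n - 1 := by
  rw [add_comm 1 x, add_pow, sum_range_succ']
  simp [mul_comm]

section

variable {K : Type*} [Field K] [CharZero K]

theorem cast_choose_div_succ (n k : ℕ) :
    (n.choose k : K) / (k + 1) = ((n + 1).choose (k + 1) : K) / (n + 1) := by
  rw [div_eq_div_iff k.cast_add_one_ne_zero n.cast_add_one_ne_zero]
  exact_mod_cast (mul_comm _ _).trans (Nat.add_one_mul_choose_eq n k)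

theorem sum_range_choose_succ_mul_pow_succ_div (n : ℕ) (x : K) :
    ∑ k ∈ range n, (n.choose (k + 1) : K) * x ^ (k + 1) / (k + 1)
      = ∑ j ∈ range n, ((1 + x) ^ (j + 1) - 1) / (j + 1) := by
  induction n with
  | zero => simp
  | succ n ih =>
    have increment : ∑ k ∈ range (n + 1), (n.choose k : K) * x ^ (k + 1) / (k + 1)
        = ((1 + x) ^ (n + 1) - 1) / (n + 1) := by
      simp_rw [mul_div_right_comm _ (x ^ _), cast_choose_div_succ, div_mul_eq_mul_div,
        ← sum_div, sum_range_choose_succ_mul_pow_succ]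
    simp_rw [Nat.choose_succ_succ', Nat.cast_add, add_mul, add_div, sum_add_distrib, increment,
      sum_range_succ _ n, Nat.choose_succ_self, ih]
    simp [add_comm]

theorem sum_Icc_choose_mul_pow_div (n : ℕ) (x : K) :
    ∑ k ∈ Icc 1 n, (n.choose k : K) * x ^ k / k = ∑ j ∈ Icc 1 n, ((1 + x) ^ j - 1) / j := by
  simpa only [sum_Icc_one_eq_sum_range, Nat.cast_add_one] using
    sum_range_choose_succ_mul_pow_succ_div n x

end

theorem stmt8_general (n : ℕ) :
    ∑ k ∈ Finset.Icc 1 n, (Nat.choose n k : ℝ) * (-1)^k * (1 - 2^k) / (k:ℝ)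
      = ∑ j ∈ Finset.Icc 1 n, (-1:ℝ)^(j-1) / (j:ℝ) := by
  have split : ∀ k : ℕ, (n.choose k : ℝ) * (-1) ^ k * (1 - 2 ^ k) / k
      = (n.choose k : ℝ) * (-1) ^ k / k - (n.choose k : ℝ) * (-2) ^ k / k := by
    intro k
    rw [show (-2 : ℝ) = -1 * 2 by norm_num, mul_pow]
    ring
  simp_rw [split, sum_sub_distrib, sum_Icc_choose_mul_pow_div, ← sum_sub_distrib]
  refine sum_congr rfl fun j hj => ?_
  obtain ⟨i, rfl⟩ := Nat.exists_eq_add_of_le' (mem_Icc.mp hj).1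
  rw [Nat.add_sub_cancel, show (1 : ℝ) + -1 = 0 by norm_num, show (1 : ℝ) + -2 = -1 by norm_num,
    zero_pow i.succ_ne_zero, pow_succ]
  ring

theorem stmt8 (n : ℕ) (hn : 1 ≤ n) :
    ∑ k ∈ Finset.Icc 1 n, (Nat.choose n k : ℝ) * (-1)^k * (1 - 2^k) / (k:ℝ)
      = ∑ j ∈ Finset.Icc 1 n, (-1:ℝ)^(j-1) / (j:ℝ) :=
  stmt8_general n
end

section
/- For every integer r ≥ 1 and every integer n ≥ 0, the sum over k from 0 to n of C(n,k)·(−1)^k/((k+1)²(k+2)···(k+r)) equals h_{n+1}^{(r)}/((n+1)(n+2)···(n+r)), where h_{n+1}^{(r)} = C(n+r, r−1)·(H_{n+r} − H_{r−1}) is the hyperharmonic number. -/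
/-!
Write `(y)_r = y (y + 1) ⋯ (y + r - 1)`. The two factorisations `(y)_(r+1) = (y)_r (y + r) =
y (y + 1)_r` give `1/(y + 1)_r - 1/(y)_r = -r/(y)_(r+1)`, so the forward difference of
`k ↦ 1/(x + k)_r` is `-r` times `k ↦ 1/(x + k)_(r+1)`; iterating, the alternating binomial sum
`∑ C(m,k) (-1)^k / (x + k)_r` equals `(r)_m / (x)_(r+m)`.

Since `C(n,k)/(k + 1) = C(n+1,k+1)/(n + 1)`, the left-hand side is `T(n+1)/(n + 1)` with
`T(m) = ∑_{k<m} C(m,k+1) (-1)^k / (k + 1)_r`. Pascal's rule turns `T(m+1) - T(m)` into such an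
alternating sum at `x = 1`, namely `(r)_m/(r + m)! = 1/((r - 1)! (r + m))`, hence
`T(m) = (H_(m+r-1) - H_(r-1))/(r - 1)!`, which is the right-hand side once the binomial
coefficient in the hyperharmonic number is cancelled against `(n + 1)_r`.
-/

open Finset Real

open fwdDiff Polynomial
open scoped Nat

theorem prod_Icc_add_eq_ascPochhammer_eval {R : Type*} [CommSemiring R] (x : R) (r : ℕ) :
    ∏ i ∈ Icc 1 r, (x + i) = (ascPochhammer R r).eval (x + 1) := by
  induction r with
  | zero => simp
  | succ r ih =>
    rw [prod_Icc_succ_top (by omega), ih, ascPochhammer_succ_eval]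
    push_cast
    ring

theorem sum_range_choose_mul_neg_one_pow_mul_eq_fwdDiff_iter {R : Type*} [CommRing R]
    (f : ℕ → R) (m : ℕ) :
    ∑ k ∈ range (m + 1), (m.choose k : R) * (-1) ^ k * f k = (-1) ^ m * Δ_[1] ^[m] f 0 := by
  rw [fwdDiff_iter_eq_sum_shift, mul_sum]
  refine sum_congr rfl fun k hk => ?_
  obtain ⟨j, rfl⟩ := Nat.exists_eq_add_of_le (Nat.lt_succ_iff.mp (mem_range.mp hk))
  simp only [Nat.add_sub_cancel_left, zero_add, smul_eq_mul, mul_one, zsmul_eq_mul]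
  push_cast
  have hsq : ((-1 : R) ^ j) ^ 2 = 1 := by rw [← pow_mul, pow_mul', neg_one_sq, one_pow]
  rw [pow_add]
  linear_combination -((k + j).choose k : R) * (-1) ^ k * f k * hsq

theorem sum_range_choose_succ_mul_neg_one_pow_mul_eq_sum_sum {R : Type*} [CommRing R]
    (a : ℕ → R) (m : ℕ) :
    ∑ k ∈ range m, (m.choose (k + 1) : R) * (-1) ^ k * a k =
      ∑ j ∈ range m, ∑ k ∈ range (j + 1), (j.choose k : R) * (-1) ^ k * a k := by
  induction m with
  | zero => simp
  | succ m ih =>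
    conv_rhs => rw [sum_range_succ, ← ih]
    simp only [Nat.choose_succ_succ', Nat.cast_add, add_mul, sum_add_distrib]
    rw [add_comm, sum_range_succ (fun k ↦ (m.choose (k + 1) : R) * (-1) ^ k * a k),
      Nat.choose_succ_self, Nat.cast_zero, zero_mul, zero_mul, add_zero]

section Field

variable {K : Type*} [Field K] {x : K}

theorem ascPochhammer_eval_add_natCast_ne_zero (hx : ∀ k : ℕ, x + k ≠ 0) (r k : ℕ) :
    (ascPochhammer K r).eval (x + k) ≠ 0 := by
  rw [ne_eq, ascPochhammer_eval_eq_zero_iff]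
  rintro ⟨j, -, hj⟩
  exact hx (k + j) (by push_cast; linear_combination hj)

theorem fwdDiff_inv_ascPochhammer_eval (hx : ∀ k : ℕ, x + k ≠ 0) (r : ℕ) :
    Δ_[1] (fun k : ℕ ↦ ((ascPochhammer K r).eval (x + k))⁻¹) =
      -(r : K) • fun k : ℕ ↦ ((ascPochhammer K (r + 1)).eval (x + k))⁻¹ := by
  funext k
  have hk := ascPochhammer_eval_add_natCast_ne_zero hx r k
  have hk1 := ascPochhammer_eval_add_natCast_ne_zero hx r (k + 1)
  have hP := ascPochhammer_eval_add_natCast_ne_zero hx (r + 1) k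
  have h_right := ascPochhammer_succ_eval r (x + k)
  have h_left : (ascPochhammer K (r + 1)).eval (x + k) =
      (x + k) * (ascPochhammer K r).eval (x + (k + 1 : ℕ)) := by
    rw [ascPochhammer_succ_left, eval_mul, eval_comp]
    push_cast
    simp only [eval_X, eval_add, eval_one, add_assoc]
  simp only [fwdDiff, Pi.smul_apply, smul_eq_mul]
  field_simp
  linear_combination (ascPochhammer K r).eval (x + k) * h_left -
    (ascPochhammer K r).eval (x + (k + 1 : ℕ)) * h_right

theorem fwdDiff_iter_inv_ascPochhammer_eval (hx : ∀ k : ℕ, x + k ≠ 0) (m r : ℕ) :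
    Δ_[1] ^[m] (fun k : ℕ ↦ ((ascPochhammer K r).eval (x + k))⁻¹) =
      ((-1) ^ m * (ascPochhammer K m).eval (r : K)) •
        fun k : ℕ ↦ ((ascPochhammer K (r + m)).eval (x + k))⁻¹ := by
  induction m generalizing r with
  | zero => simp
  | succ m ih =>
    rw [Function.iterate_succ_apply, fwdDiff_inv_ascPochhammer_eval hx, fwdDiff_iter_const_smul,
      ih, smul_smul, ascPochhammer_succ_left, eval_mul, eval_comp, add_right_comm, pow_succ]
    simp only [eval_X, eval_add, eval_one, Nat.cast_add, Nat.cast_one]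
    ring_nf

theorem sum_choose_mul_neg_one_pow_div_ascPochhammer_eval (hx : ∀ k : ℕ, x + k ≠ 0)
    (m r : ℕ) :
    ∑ k ∈ range (m + 1), (m.choose k : K) * (-1) ^ k / (ascPochhammer K r).eval (x + k) =
      (ascPochhammer K m).eval (r : K) / (ascPochhammer K (r + m)).eval x := by
  simp only [div_eq_mul_inv]
  rw [sum_range_choose_mul_neg_one_pow_mul_eq_fwdDiff_iter
      (fun k : ℕ ↦ ((ascPochhammer K r).eval (x + k))⁻¹),
    fwdDiff_iter_inv_ascPochhammer_eval hx]
  simp only [Pi.smul_apply, smul_eq_mul, Nat.cast_zero, add_zero]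
  rw [← mul_assoc, ← mul_assoc, ← pow_add, ← two_mul, pow_mul, neg_one_sq, one_pow, one_mul]

end Field

theorem H_add_sub_H (s m : ℕ) :
    H (s + m) - H s = ∑ j ∈ range m, 1 / ((s + j : ℕ) + 1 : ℝ) := by
  rw [H, H, sum_range_add, add_sub_cancel_left]

theorem ascPochhammer_eval_natCast_div_eval_one (s j : ℕ) :
    (ascPochhammer ℝ j).eval ((s + 1 : ℕ) : ℝ) / (ascPochhammer ℝ (s + 1 + j)).eval 1 =
      1 / (s ! * ((s + j : ℕ) + 1 : ℝ)) := by
  have h := factorial_mul_ascPochhammer ℝ s j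
  have hP := ascPochhammer_pos j ((s : ℝ) + 1) (by positivity)
  rw [ascPochhammer_eval_one, add_right_comm, Nat.factorial_succ]
  push_cast at h ⊢
  rw [← h]
  field_simp

theorem sum_range_choose_succ_mul_neg_one_pow_div_ascPochhammer_eval_one_add (s m : ℕ) :
    ∑ k ∈ range m,
        (m.choose (k + 1) : ℝ) * (-1) ^ k / (ascPochhammer ℝ (s + 1)).eval (1 + k : ℝ) =
      (H (s + m) - H s) / s ! := by
  simp only [div_eq_mul_inv]
  rw [sum_range_choose_succ_mul_neg_one_pow_mul_eq_sum_sum]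
  simp only [← div_eq_mul_inv]
  rw [H_add_sub_H, sum_div]
  refine sum_congr rfl fun j _ ↦ ?_
  rw [sum_choose_mul_neg_one_pow_div_ascPochhammer_eval (fun k ↦ by positivity),
    ascPochhammer_eval_natCast_div_eval_one]
  field_simp

theorem hh_succ_div_ascPochhammer_eval (s n : ℕ) :
    hh (s + 1) (n + 1) / (ascPochhammer ℝ (s + 1)).eval ((n : ℝ) + 1) =
      (H (n + 1 + s) - H s) / (s ! * ((n : ℝ) + 1)) := by
  have h_choose : ((n + 1 + s).choose s : ℝ) * (((n : ℝ) + 1) * n !) * s ! = (n + 1 + s)! := by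
    exact_mod_cast Nat.factorial_succ n ▸ Nat.add_choose_mul_factorial_mul_factorial (n + 1) s
  have h_poch := factorial_mul_ascPochhammer ℝ n (s + 1)
  rw [← add_assoc, add_right_comm] at h_poch
  have h_eval : (ascPochhammer ℝ (s + 1)).eval ((n : ℝ) + 1) =
      (n + 1 + s).choose s * ((n : ℝ) + 1) * s ! :=
    mul_left_cancel₀ (by positivity : (n ! : ℝ) ≠ 0) (by rw [h_poch, ← h_choose]; ring)
  rw [hh, ← add_assoc, Nat.add_sub_cancel, Nat.add_sub_cancel, h_eval]
  have h_pos : (0 : ℝ) < (n + 1 + s).choose s := by exact_mod_cast Nat.choose_pos (by omega)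
  field_simp

theorem stmt10 (r n : ℕ) (hr : 1 ≤ r) :
    ∑ k ∈ Finset.range (n+1), (Nat.choose n k : ℝ) * (-1)^k /
        (((k:ℝ)+1) * ∏ i ∈ Finset.Icc 1 r, ((k:ℝ) + i))
      = hh r (n+1) / (∏ i ∈ Finset.Icc 1 r, ((n:ℝ) + i)) := by
  obtain ⟨s, rfl⟩ : ∃ s, r = s + 1 := ⟨r - 1, by omega⟩
  simp only [prod_Icc_add_eq_ascPochhammer_eval]
  have h_term : ∀ k ∈ range (n + 1), (n.choose k : ℝ) * (-1) ^ k /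
      (((k : ℝ) + 1) * (ascPochhammer ℝ (s + 1)).eval ((k : ℝ) + 1)) =
      ((n + 1).choose (k + 1) : ℝ) * (-1) ^ k / (ascPochhammer ℝ (s + 1)).eval (1 + k : ℝ) /
        ((n : ℝ) + 1) := by
    intro k _
    have h : ((n : ℝ) + 1) * n.choose k = (n + 1).choose (k + 1) * ((k : ℝ) + 1) := by
      exact_mod_cast Nat.add_one_mul_choose_eq n k
    have hP := ascPochhammer_pos (s + 1) ((k : ℝ) + 1) (by positivity)
    rw [add_comm 1 (k : ℝ)]
    field_simp
    linear_combination h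
  rw [sum_congr rfl h_term, ← sum_div,
    sum_range_choose_succ_mul_neg_one_pow_div_ascPochhammer_eval_one_add,
    hh_succ_div_ascPochhammer_eval, add_comm s]
  field_simp
end

section
/- For every integer r ≥ 1 and every integer n ≥ 0, the sum over k from 0 to n of C(n,k)·(−1)^k·H_k/((k+1)(k+2)···(k+r)) equals −h_n^{(r)}/((n+1)(n+2)···(n+r)). -/
/-!
Write `B_n g = ∑ₖ C(n,k) (-1)^k g(k)`; Pascal's rule gives `B_{n+1} g = B_n (g - g(· + 1))`.
With `A_r(k) = (k+1)⋯(k+r)` one has `1/A_r(k) - 1/A_r(k+1) = r/A_{r+1}(k)` and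
`(k+1) A_r(k+1) = A_{r+1}(k)`, so the difference of `H/A_r` is `r H/A_{r+1} - 1/A_{r+1}`.
An induction on `n`, for all `r` at once, then gives `B_n(1/A_r) = 1/((r-1)! (n+r))` and
`B_n(H/A_r) = -(H_{n+r-1} - H_{r-1}) / ((r-1)! (n+r))`, which is the claim because
`A_r(n) = (r-1)! C(n+r-1, r-1) (n+r)`.
-/

open Finset Real

section AlternatingBinomialSum

variable {R : Type*} [CommRing R]

def alternatingBinomialSum (g : ℕ → R) (n : ℕ) : R :=
  ∑ k ∈ range (n + 1), (n.choose k : R) * (-1) ^ k * g k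

theorem alternatingBinomialSum_zero (g : ℕ → R) : alternatingBinomialSum g 0 = g 0 := by
  simp [alternatingBinomialSum]

theorem alternatingBinomialSum_succ (g : ℕ → R) (n : ℕ) :
    alternatingBinomialSum g (n + 1) =
      alternatingBinomialSum g n - alternatingBinomialSum (fun k ↦ g (k + 1)) n := by
  simp only [alternatingBinomialSum, mul_assoc]
  rw [Finset.sum_choose_succ_mul (fun i _ ↦ (-1) ^ i * g i), sub_eq_add_neg, ← sum_neg_distrib]
  congr 1
  refine sum_congr rfl fun k _ ↦ ?_
  ring

theorem alternatingBinomialSum_sub (f g : ℕ → R) (n : ℕ) :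
    alternatingBinomialSum (f - g) n = alternatingBinomialSum f n - alternatingBinomialSum g n := by
  simp only [alternatingBinomialSum, Pi.sub_apply, mul_sub, sum_sub_distrib]

theorem alternatingBinomialSum_smul (c : R) (g : ℕ → R) (n : ℕ) :
    alternatingBinomialSum (c • g) n = c * alternatingBinomialSum g n := by
  simp only [alternatingBinomialSum, Pi.smul_apply, smul_eq_mul, mul_sum]
  exact sum_congr rfl fun k _ ↦ by ring

end AlternatingBinomialSum

theorem prod_Icc_natCast_add_eq_ascFactorial {R : Type*} [CommSemiring R] (k r : ℕ) :
    ∏ i ∈ Icc 1 r, ((k : R) + i) = ((k + 1).ascFactorial r : R) := by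
  induction r with
  | zero => simp
  | succ r ih =>
    rw [prod_Icc_succ_top (by omega), ih, Nat.ascFactorial_succ]
    push_cast; ring

theorem Nat.ascFactorial_succ' (n r : ℕ) :
    n.ascFactorial (r + 1) = n * (n + 1).ascFactorial r := by
  rw [Nat.succ_ascFactorial, Nat.ascFactorial_succ]

section AscFactorial

variable {K : Type*} [Field K] [CharZero K]

theorem ascFactorial_succ_ne_zero (k r : ℕ) : ((k + 1).ascFactorial r : K) ≠ 0 := by
  exact_mod_cast (k.ascFactorial_pos r).ne'

theorem inv_ascFactorial_sub_inv_ascFactorial_succ (r k : ℕ) :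
    ((k + 1).ascFactorial r : K)⁻¹ - ((k + 2).ascFactorial r : K)⁻¹ =
      r * ((k + 1).ascFactorial (r + 1) : K)⁻¹ := by
  have h₁ : ((k + 1).ascFactorial (r + 1) : K) = (k + 1 + r) * (k + 1).ascFactorial r := by
    exact_mod_cast Nat.ascFactorial_succ
  have h₂ : ((k + 1).ascFactorial (r + 1) : K) = (k + 1) * (k + 2).ascFactorial r := by
    exact_mod_cast Nat.ascFactorial_succ' (k + 1) r
  have := ascFactorial_succ_ne_zero (K := K) k r
  have := ascFactorial_succ_ne_zero (K := K) (k + 1) r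
  have := Nat.cast_add_one_ne_zero (R := K) k
  rw [h₂]
  rw [h₁] at h₂
  field_simp
  linear_combination -h₂

open Nat in
theorem alternatingBinomialSum_inv_ascFactorial (s n : ℕ) :
    alternatingBinomialSum (fun k ↦ ((k + 1).ascFactorial (s + 1) : K)⁻¹) n =
      ((s ! : K) * (n + s + 1))⁻¹ := by
  induction n generalizing s with
  | zero =>
    rw [alternatingBinomialSum_zero, one_ascFactorial, factorial_succ]
    push_cast; ring
  | succ n ih =>
    have hdiff : (fun k ↦ ((k + 1).ascFactorial (s + 1) : K)⁻¹) -
        (fun k ↦ ((k + 1 + 1).ascFactorial (s + 1) : K)⁻¹) =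
        ((s + 1 : ℕ) : K) • fun k ↦ ((k + 1).ascFactorial (s + 1 + 1) : K)⁻¹ := by
      funext k
      exact inv_ascFactorial_sub_inv_ascFactorial_succ (s + 1) k
    rw [alternatingBinomialSum_succ, ← alternatingBinomialSum_sub, hdiff,
      alternatingBinomialSum_smul, ih, factorial_succ]
    have := Nat.cast_add_one_ne_zero (R := K) s
    have := (Nat.cast_ne_zero (R := K)).mpr (factorial_ne_zero s)
    push_cast
    field_simp
    ring

end AscFactorial

theorem H_succ (n : ℕ) : H (n + 1) = H n + 1 / (n + 1) := by
  rw [H, sum_range_succ]; rfl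

open Nat in
theorem alternatingBinomialSum_H_div_ascFactorial (s n : ℕ) :
    alternatingBinomialSum (fun k ↦ H k / (k + 1).ascFactorial (s + 1)) n =
      -(H (n + s) - H s) / (s ! * (n + s + 1)) := by
  induction n generalizing s with
  | zero => simp [alternatingBinomialSum_zero, H]
  | succ n ih =>
    have hdiff : (fun k ↦ H k / (k + 1).ascFactorial (s + 1)) -
        (fun k ↦ H (k + 1) / (k + 1 + 1).ascFactorial (s + 1)) =
        ((s + 1 : ℕ) : ℝ) • (fun k ↦ H k / (k + 1).ascFactorial (s + 1 + 1)) -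
          fun k ↦ ((k + 1).ascFactorial (s + 1 + 1) : ℝ)⁻¹ := by
      funext k
      have hinv := inv_ascFactorial_sub_inv_ascFactorial_succ (K := ℝ) (s + 1) k
      have hmul : ((k + 1).ascFactorial (s + 1 + 1) : ℝ) =
          (k + 1) * (k + 2).ascFactorial (s + 1) := by
        exact_mod_cast Nat.ascFactorial_succ' (k + 1) (s + 1)
      rw [hmul, mul_inv] at hinv
      simp only [Pi.sub_apply, Pi.smul_apply, smul_eq_mul, H_succ, div_eq_mul_inv, hmul, mul_inv,
        show k + 1 + 1 = k + 2 from rfl]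
      linear_combination H k * hinv
    rw [alternatingBinomialSum_succ, ← alternatingBinomialSum_sub, hdiff,
      alternatingBinomialSum_sub, alternatingBinomialSum_smul, ih,
      alternatingBinomialSum_inv_ascFactorial, factorial_succ,
      show n + (s + 1) = n + s + 1 by omega, show n + 1 + s = n + s + 1 by omega, H_succ, H_succ]
    have := Nat.cast_add_one_ne_zero (R := ℝ) s
    have := (Nat.cast_ne_zero (R := ℝ)).mpr (factorial_ne_zero s)
    push_cast
    field_simp
    ring

theorem hh_succ (s n : ℕ) : hh (s + 1) n = (n + s).choose s * (H (n + s) - H s) := by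
  simp only [hh, Nat.add_sub_cancel, ← add_assoc]

theorem stmt11 (r n : ℕ) (hr : 1 ≤ r) :
    ∑ k ∈ Finset.range (n+1), (Nat.choose n k : ℝ) * (-1)^k * H k /
        (∏ i ∈ Finset.Icc 1 r, ((k:ℝ) + i))
      = - hh r n / (∏ i ∈ Finset.Icc 1 r, ((n:ℝ) + i)) := by
  obtain ⟨s, rfl⟩ := Nat.exists_eq_add_of_le' hr
  simp only [prod_Icc_natCast_add_eq_ascFactorial, mul_div_assoc]
  have hA : ((n + 1).ascFactorial (s + 1) : ℝ) =
      (n + s + 1) * (s.factorial * (n + s).choose s) := by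
    rw [Nat.ascFactorial_succ, Nat.ascFactorial_eq_factorial_mul_choose]
    push_cast; ring
  have := (Nat.cast_ne_zero (R := ℝ)).mpr (Nat.choose_pos (Nat.le_add_left s n)).ne'
  have := (Nat.cast_ne_zero (R := ℝ)).mpr s.factorial_ne_zero
  rw [← alternatingBinomialSum, alternatingBinomialSum_H_div_ascFactorial, hh_succ, hA]
  field_simp
end

section
/- For every integer r ≥ 2 and every integer n ≥ 0, the sum over k from 0 to n of (−1)^k·C(n,k)·k/(k+r−1)² equals −h_n^{(r)}/C(n+r−1, n)². -/
/-!
With `x = r - 1`, split `k / (x + k)^2 = 1 / (x + k) - x / (x + k)^2`. An alternating binomial sum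
`∑ (-1)^k C(n,k) f (x + k)` is `(-1)^n` times the `n`-th forward difference of `f` at `x`. For
`f y = 1 / y` and `f y = 1 / y^2` these differences have the closed forms
`(-1)^n n! / (x)_{n+1}` and `(-1)^n n! / (x)_{n+1} * ∑_{j ≤ n} 1 / (x + j)`, both by induction on
`n` from `Δ^{n+1} f x = Δ^n f (x + 1) - Δ^n f x` and `(x)_{n+1} (x + n + 1) = x (x + 1)_{n+1}`.
At `x = r - 1` the Pochhammer symbol is `(r - 1) n! C(n+r-1, n)` and
`∑_{j ≤ n} 1 / (x + j) = 1 / x + H_{n+r-1} - H_{r-1}`.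
-/

open Finset Real

open Polynomial fwdDiff
open scoped Nat

lemma fwdDiff_iter_succ_apply {M G : Type*} [AddCommMonoid M] [AddCommGroup G] (h : M)
    (f : M → G) (n : ℕ) (x : M) :
    (Δ_[h])^[n + 1] f x = (Δ_[h])^[n] f (x + h) - (Δ_[h])^[n] f x := by
  rw [Function.iterate_succ_apply']; rfl

lemma sum_range_alternating_choose_eq_fwdDiff_iter {R : Type*} [CommRing R] (f : R → R)
    (n : ℕ) (x : R) :
    ∑ k ∈ range (n + 1), (-1) ^ k * (n.choose k : R) * f (x + k)
      = (-1) ^ n * (Δ_[1])^[n] f x := by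
  rw [fwdDiff_iter_eq_sum_shift, mul_sum]
  refine sum_congr rfl fun k hk => ?_
  obtain ⟨i, rfl⟩ := Nat.exists_eq_add_of_le (Nat.le_of_lt_succ (mem_range.mp hk))
  have hsign : (-1 : R) ^ (k + i) * (-1) ^ i = (-1) ^ k := by
    rw [pow_add, mul_assoc, ← pow_add, Even.neg_one_pow ⟨i, rfl⟩, mul_one]
  simp only [zsmul_eq_mul, nsmul_eq_mul, mul_one, Nat.add_sub_cancel_left]
  push_cast
  linear_combination -((k + i).choose k * f (x + k) : R) * hsign

section Pochhammer

variable {S : Type*} [CommSemiring S]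

lemma ascPochhammer_eval_mul_add_natCast (n : ℕ) (x : S) :
    (ascPochhammer S n).eval x * (x + n) = x * (ascPochhammer S n).eval (x + 1) := by
  rw [← ascPochhammer_succ_eval]
  simp [ascPochhammer_succ_left]

lemma ascPochhammer_succ_eval_natCast (a n : ℕ) :
    (ascPochhammer S (n + 1)).eval (a : S) = a * n ! * (a + n).choose n := by
  rw [ascPochhammer_succ_left, eval_mul, eval_comp, eval_X, eval_add, eval_X, eval_one,
    ← Nat.cast_succ, ← Nat.cast_ascFactorial, Nat.ascFactorial_eq_factorial_mul_choose]
  push_cast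
  ring

end Pochhammer

section AlternatingSums

variable {K : Type*} [Field K] {x : K}

lemma ascPochhammer_eval_ne_zero (hx : ∀ j : ℕ, x + j ≠ 0) (n : ℕ) :
    (ascPochhammer K n).eval x ≠ 0 := by
  induction n with
  | zero => simp
  | succ n ih => rw [ascPochhammer_succ_eval]; exact mul_ne_zero ih (hx n)

lemma add_one_add_natCast_ne_zero (hx : ∀ j : ℕ, x + j ≠ 0) (j : ℕ) : x + 1 + j ≠ 0 := by
  convert hx (j + 1) using 1
  push_cast
  ring

lemma fwdDiff_iter_inv (hx : ∀ j : ℕ, x + j ≠ 0) (n : ℕ) :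
    (Δ_[1])^[n] (·⁻¹) x = (-1) ^ n * n ! / (ascPochhammer K (n + 1)).eval x := by
  induction n generalizing x with
  | zero => simp
  | succ n ih =>
    have hrel := ascPochhammer_eval_mul_add_natCast (n + 1) x
    have hP := ascPochhammer_eval_ne_zero hx (n + 1)
    have hQ := ascPochhammer_eval_ne_zero (add_one_add_natCast_ne_zero hx) (n + 1)
    have hxn := hx (n + 1)
    rw [fwdDiff_iter_succ_apply, ih hx, ih (add_one_add_natCast_ne_zero hx),
      ascPochhammer_succ_eval (n + 1) x, Nat.factorial_succ]
    generalize (ascPochhammer K (n + 1)).eval x = P at *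
    generalize (ascPochhammer K (n + 1)).eval (x + 1) = Q at *
    push_cast at hrel hxn ⊢
    field_simp
    linear_combination (-1) ^ n * (n ! : K) * hrel

lemma fwdDiff_iter_inv_sq (hx : ∀ j : ℕ, x + j ≠ 0) (n : ℕ) :
    (Δ_[1])^[n] (fun y => (y ^ 2)⁻¹) x
      = (-1) ^ n * n ! / (ascPochhammer K (n + 1)).eval x * ∑ j ∈ range (n + 1), (x + j)⁻¹ := by
  induction n generalizing x with
  | zero => simp [sq]
  | succ n ih =>
    have hrel := ascPochhammer_eval_mul_add_natCast (n + 1) x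
    have hsum : ∑ j ∈ range (n + 1), (x + j)⁻¹ + (x + (n + 1 : ℕ))⁻¹
        = x⁻¹ + ∑ j ∈ range (n + 1), (x + 1 + j)⁻¹ := by
      rw [← sum_range_succ, sum_range_succ', add_comm]
      simp only [Nat.cast_zero, add_zero, Nat.cast_succ, add_assoc, add_comm (1 : K)]
    have hP := ascPochhammer_eval_ne_zero hx (n + 1)
    have hQ := ascPochhammer_eval_ne_zero (add_one_add_natCast_ne_zero hx) (n + 1)
    have hx0 : x ≠ 0 := by simpa using hx 0
    have hxn := hx (n + 1)
    rw [fwdDiff_iter_succ_apply, ih hx, ih (add_one_add_natCast_ne_zero hx),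
      ascPochhammer_succ_eval (n + 1) x, Nat.factorial_succ, sum_range_succ _ (n + 1)]
    generalize (ascPochhammer K (n + 1)).eval x = P at *
    generalize (ascPochhammer K (n + 1)).eval (x + 1) = Q at *
    generalize ∑ j ∈ range (n + 1), (x + j)⁻¹ = T at *
    generalize ∑ j ∈ range (n + 1), (x + 1 + j)⁻¹ = U at *
    push_cast at hrel hxn hsum ⊢
    field_simp at hsum ⊢
    linear_combination (-1) ^ n * (n ! : K) * ((x + (n + 1)) * U * hrel - Q * hsum)

lemma sum_range_alternating_choose_inv (hx : ∀ j : ℕ, x + j ≠ 0) (n : ℕ) :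
    ∑ k ∈ range (n + 1), (-1) ^ k * (n.choose k : K) * (x + k)⁻¹
      = n ! / (ascPochhammer K (n + 1)).eval x := by
  rw [sum_range_alternating_choose_eq_fwdDiff_iter (·⁻¹), fwdDiff_iter_inv hx]
  simp only [mul_div_assoc, ← mul_assoc, ← mul_pow, neg_one_mul, neg_neg, one_pow, one_mul]

lemma sum_range_alternating_choose_inv_sq (hx : ∀ j : ℕ, x + j ≠ 0) (n : ℕ) :
    ∑ k ∈ range (n + 1), (-1) ^ k * (n.choose k : K) * ((x + k) ^ 2)⁻¹
      = n ! / (ascPochhammer K (n + 1)).eval x * ∑ j ∈ range (n + 1), (x + j)⁻¹ := by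
  rw [sum_range_alternating_choose_eq_fwdDiff_iter (fun y => (y ^ 2)⁻¹),
    fwdDiff_iter_inv_sq hx]
  simp only [mul_div_assoc, ← mul_assoc, ← mul_pow, neg_one_mul, neg_neg, one_pow, one_mul]

end AlternatingSums

lemma hh_eq_choose_mul_sum (r n : ℕ) (hr : 1 ≤ r) :
    hh r n = (n + r - 1).choose n * ∑ j ∈ range n, ((r : ℝ) + j)⁻¹ := by
  obtain ⟨m, rfl⟩ := Nat.exists_eq_add_of_le' hr
  have hH : H (n + (m + 1) - 1) - H (m + 1 - 1) = ∑ j ∈ range n, ((m + 1 : ℕ) + j : ℝ)⁻¹ := by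
    rw [show n + (m + 1) - 1 = m + n by omega, Nat.add_sub_cancel, H, H, sum_range_add,
      add_sub_cancel_left]
    refine sum_congr rfl fun j _ => ?_
    push_cast
    ring
  rw [hh, hH, Nat.add_sub_cancel, show n + (m + 1) - 1 = n + m by omega, Nat.choose_symm_add]

theorem stmt18 (r n : ℕ) (hr : 2 ≤ r) :
    ∑ k ∈ Finset.range (n+1), (-1:ℝ)^k * (Nat.choose n k : ℝ) * (k:ℝ) / ((k:ℝ) + r - 1)^2
      = - hh r n / ((Nat.choose (n+r-1) n : ℝ))^2 := by
  set x : ℝ := r - 1 with hx_def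
  have hx_pos : 0 < x := by
    rw [hx_def, sub_pos, Nat.one_lt_cast]
    omega
  have hx : ∀ j : ℕ, x + j ≠ 0 := fun j => by positivity
  have hsplit : ∑ k ∈ range (n + 1), (-1 : ℝ) ^ k * (n.choose k : ℝ) * k / (k + r - 1) ^ 2
      = ∑ k ∈ range (n + 1), (-1) ^ k * (n.choose k : ℝ) * (x + k)⁻¹
        - x * ∑ k ∈ range (n + 1), (-1) ^ k * (n.choose k : ℝ) * ((x + k) ^ 2)⁻¹ := by
    rw [mul_sum, ← sum_sub_distrib]
    refine sum_congr rfl fun k _ => ?_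
    have hk := hx k
    rw [show (k : ℝ) + r - 1 = x + k by ring]
    field_simp
    ring
  have hP : (ascPochhammer ℝ (n + 1)).eval x = x * n ! * (n + r - 1).choose n := by
    have := ascPochhammer_succ_eval_natCast (S := ℝ) (r - 1) n
    rwa [Nat.cast_sub (by omega), Nat.cast_one, show r - 1 + n = n + r - 1 by omega] at this
  have hS : ∑ j ∈ range (n + 1), (x + j)⁻¹ = x⁻¹ + ∑ j ∈ range n, ((r : ℝ) + j)⁻¹ := by
    rw [sum_range_succ', add_comm, Nat.cast_zero, add_zero]
    refine congrArg _ (sum_congr rfl fun j _ => ?_)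
    push_cast
    ring
  have hC : ((n + r - 1).choose n : ℝ) ≠ 0 := by
    exact_mod_cast (Nat.choose_pos (by omega)).ne'
  rw [hsplit, sum_range_alternating_choose_inv hx, sum_range_alternating_choose_inv_sq hx, hP,
    hS, hh_eq_choose_mul_sum r n (by omega)]
  field_simp
  ring
end
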